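/- arXiv:2312.14272 — 9 statements merged into one kernel-verified Lean document; each statement's English description precedes it below -/
import Mathlib

section
/- Let A ⊆ ℝ, f : A → ℝ, and a, L ∈ ℝ. Then the following are equivalent: (1) for every ε > 0 there exists δ > 0 such that the set {x ∈ ((a−δ, a+δ) \ {a}) ∩ A : |f(x) − L| ≥ ε} is empty; (2) for every ε > 0 there exists δ > 0 such that the set {x ∈ ((a−δ, a+δ) \ {a}) ∩ A : |f(x) − L| ≥ ε} is finite. -/
open Set

/-- Exceptional set for the limit of `f` restricted to `A` at `a` with value `L`. -/
def excepSet (A : Set ℝ) (f : ℝ → ℝ) (a L δ ε : ℝ) : Set ℝ :=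
  {x | x ∈ Set.Ioo (a - δ) (a + δ) ∧ x ≠ a ∧ x ∈ A ∧ ε ≤ |f x - L|}

theorem stmt_0 (A : Set ℝ) (f : ℝ → ℝ) (a L : ℝ) :
    (∀ ε > 0, ∃ δ > 0, excepSet A f a L δ ε = ∅) ↔
    (∀ ε > 0, ∃ δ > 0, (excepSet A f a L δ ε).Finite) := by
  constructor
  · intro h ε hε
    obtain ⟨δ, hδ, he⟩ := h ε hε
    exact ⟨δ, hδ, he ▸ Set.finite_empty⟩
  · intro h ε hε
    obtain ⟨δ, hδ, hfin⟩ := h ε hε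
    by_cases hS : (excepSet A f a L δ ε).Nonempty
    · obtain ⟨x₀, hx₀, hmin⟩ := Set.exists_min_image _ (fun x => |x - a|) hfin hS
      have hx0pos : 0 < |x₀ - a| := abs_pos.mpr (sub_ne_zero.mpr hx₀.2.1)
      refine ⟨min δ |x₀ - a|, lt_min hδ hx0pos, ?_⟩
      ext x
      simp only [Set.mem_empty_iff_false, iff_false]
      rintro ⟨hIoo, hne, hA, habs⟩
      have hlt : |x - a| < min δ |x₀ - a| := by
        rw [abs_sub_lt_iff]
        constructor <;> [linarith [hIoo.2]; linarith [hIoo.1]]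
      have hxS : x ∈ excepSet A f a L δ ε := by
        have h1 : |x - a| < δ := lt_of_lt_of_le hlt (min_le_left _ _)
        rw [abs_sub_lt_iff] at h1
        exact ⟨⟨by linarith [h1.2], by linarith [h1.1]⟩, hne, hA, habs⟩
      have := hmin x hxS
      have := lt_of_lt_of_le hlt (min_le_right _ _)
      linarith
    · exact ⟨δ, hδ, Set.not_nonempty_iff_eq_empty.mp hS⟩
end

section
/- Let A ⊆ ℝ, f : A → ℝ, and a, L ∈ ℝ. Then the classical limit of f at a equals L if and only if for every ε > 0 there exists δ > 0 such that the set {x ∈ ((a−δ, a+δ) \ {a}) ∩ A : |f(x) − L| ≥ ε} has no accumulation (limit) points in ℝ. -/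
/-!
The exceptional set for `δ` lies in the compact interval `[a - δ, a + δ]`, so if it has no
accumulation points it is finite. A finite set avoiding `a` stays at positive distance from `a`,
so shrinking `δ` below that distance makes the exceptional set empty.
-/

open Set

theorem Set.finite_of_subset_isCompact_of_forall_not_accPt {X : Type*} [TopologicalSpace X]
    {s K : Set X} (hK : IsCompact K) (hsK : s ⊆ K) (hs : ∀ x, ¬AccPt x (Filter.principal s)) :
    s.Finite := by
  by_contra hinf
  obtain ⟨x, -, hx⟩ := Set.Infinite.exists_accPt_of_subset_isCompact hinf hK hsK
  exact hs x hx

theorem Set.Finite.exists_pos_disjoint_ball {X : Type*} [PseudoMetricSpace X] [T1Space X]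
    {s : Set X} {a : X} (hs : s.Finite) (ha : a ∉ s) :
    ∃ r > 0, Disjoint (Metric.ball a r) s := by
  obtain ⟨r, hr, hball⟩ := Metric.mem_nhds_iff.mp (hs.isClosed.isOpen_compl.mem_nhds ha)
  exact ⟨r, hr, Set.subset_compl_iff_disjoint_right.mp hball⟩

section excepSet

variable {A : Set ℝ} {f : ℝ → ℝ} {a L δ ε : ℝ}

theorem excepSet_subset_ball : excepSet A f a L δ ε ⊆ Metric.ball a δ := fun _ hx => by
  simpa [Real.ball_eq_Ioo] using hx.1

theorem self_notMem_excepSet : a ∉ excepSet A f a L δ ε := fun ha => ha.2.1 rfl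

theorem excepSet_mono {δ' : ℝ} (h : δ' ≤ δ) : excepSet A f a L δ' ε ⊆ excepSet A f a L δ ε :=
  fun _ ⟨hx, hxa, hxA, hfx⟩ =>
    ⟨Set.Ioo_subset_Ioo (by linarith) (by linarith) hx, hxa, hxA, hfx⟩

end excepSet

theorem stmt_1 (A : Set ℝ) (f : ℝ → ℝ) (a L : ℝ) :
    (∀ ε > 0, ∃ δ > 0, excepSet A f a L δ ε = ∅) ↔
    (∀ ε > 0, ∃ δ > 0, ∀ x : ℝ, ¬ AccPt x (Filter.principal (excepSet A f a L δ ε))) := by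
  refine forall₂_congr fun ε _ => ⟨fun ⟨δ, hδ, hempty⟩ => ⟨δ, hδ, fun x hx => ?_⟩,
    fun ⟨δ, hδ, hnoAcc⟩ => ?_⟩
  · rw [hempty] at hx
    exact Set.finite_empty.not_infinite (Set.Infinite.of_accPt hx)
  · have hfin : (excepSet A f a L δ ε).Finite :=
      Set.finite_of_subset_isCompact_of_forall_not_accPt (isCompact_closedBall a δ)
        (excepSet_subset_ball.trans Metric.ball_subset_closedBall) hnoAcc
    obtain ⟨r, hr, hdisj⟩ := hfin.exists_pos_disjoint_ball self_notMem_excepSet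
    refine ⟨min δ r, lt_min hδ hr, Set.subset_empty_iff.mp fun x hx => ?_⟩
    exact Set.disjoint_left.mp hdisj
      (Metric.ball_subset_ball (min_le_right δ r) (excepSet_subset_ball hx))
      (excepSet_mono (min_le_left δ r) hx)
end

section
/- Let C be the Cantor middle-thirds set and χ_C : ℝ → ℝ its characteristic function. Then 0 is the T₆ limit of χ_C at 0 (indeed the exceptional sets {x ∈ (−δ, δ) \ {0} : |χ_C(x)| ≥ ε} have Lebesgue measure zero), but 0 is not the T₅ limit of χ_C at 0, since for every δ > 0 the set {x ∈ (−δ, δ) \ {0} : |χ_C(x)| ≥ 1} = C ∩ (0, δ) is uncountable. -/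
/-!
Since `C = C/3 ∪ (2 + C)/3` and both pieces are homothetic images of `C` with ratio `1/3`, the
finite number `volume C` is at most `(2/3) · volume C`, hence zero; every exceptional set of the
T₆ limit lies in `C`. On the other hand `C ≃ (ℕ → Bool)` is uncountable and `x ↦ x / 3^k` embeds
it into `C ∩ [0, 3^(-k)]`, so `C ∩ (0, δ)` is uncountable for every `δ > 0`.
-/

open Set

/-- Characteristic function of the Cantor set. -/
noncomputable def chiCantor : ℝ → ℝ := Set.indicator cantorSet (fun _ => 1)

open MeasureTheory

theorem volume_cantorSet : volume cantorSet = 0 := by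
  have hleft : (· / 3 : ℝ → ℝ) = AffineMap.homothety 0 (1 / 3 : ℝ) := by
    ext x; simp [AffineMap.homothety_apply]; ring
  have hright : (fun x : ℝ ↦ (2 + x) / 3) = AffineMap.homothety 1 (1 / 3 : ℝ) := by
    ext x; simp [AffineMap.homothety_apply]; ring
  have hfin : volume cantorSet ≠ ⊤ :=
    ((measure_mono cantorSet_subset_unitInterval).trans_lt (by simp)).ne
  have hle : volume cantorSet ≤ 2 / 3 * volume cantorSet :=
    calc volume cantorSet
        ≤ volume ((· / 3) '' cantorSet) + volume ((fun x ↦ (2 + x) / 3) '' cantorSet) := by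
          conv_lhs => rw [cantorSet_eq_union_halves]
          exact measure_union_le _ _
      _ = 2 / 3 * volume cantorSet := by
          rw [hleft, hright, Measure.addHaar_image_homothety, Measure.addHaar_image_homothety,
            ← add_mul]
          congr 1
          rw [← ENNReal.ofReal_add (by positivity) (by positivity)]
          norm_num [ENNReal.ofReal_div_of_pos]
  by_contra h0
  have hlt := ENNReal.mul_lt_mul_right h0 hfin (show (2 / 3 : ENNReal) < 1 by
    norm_num [ENNReal.div_lt_iff])
  rw [mul_one, mul_comm] at hlt
  exact hlt.not_ge hle

theorem div_three_mem_cantorSet {x : ℝ} (hx : x ∈ cantorSet) : x / 3 ∈ cantorSet := by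
  rw [cantorSet_eq_union_halves]
  exact Or.inl (mem_image_of_mem _ hx)

theorem div_three_pow_mem_cantorSet {x : ℝ} (hx : x ∈ cantorSet) (k : ℕ) :
    x / 3 ^ k ∈ cantorSet := by
  induction k with
  | zero => simpa using hx
  | succ k ih => simpa [pow_succ, div_div] using div_three_mem_cantorSet ih

instance : Uncountable (ℕ → Bool) := by
  rw [← not_countable_iff, ← Cardinal.mk_le_aleph0_iff, not_le]
  simpa using Cardinal.cantor Cardinal.aleph0

theorem not_countable_cantorSet : ¬ cantorSet.Countable := fun h ↦
  not_countable (cantorSetEquivNatToBool.countable_iff.1 h.to_subtype)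

theorem not_countable_cantorSet_inter_Ioo {δ : ℝ} (hδ : 0 < δ) :
    ¬ (cantorSet ∩ Ioo 0 δ).Countable := by
  intro hcount
  obtain ⟨k, hk⟩ := exists_pow_lt_of_lt_one hδ (by norm_num : (1 / 3 : ℝ) < 1)
  have hsub : (· / 3 ^ k) '' cantorSet ⊆ insert 0 (cantorSet ∩ Ioo 0 δ) := by
    rintro _ ⟨x, hx, rfl⟩
    obtain ⟨hx0, hx1⟩ := cantorSet_subset_unitInterval hx
    rcases hx0.eq_or_lt with rfl | hpos
    · simp
    refine Or.inr ⟨div_three_pow_mem_cantorSet hx k, by positivity, ?_⟩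
    calc x / 3 ^ k ≤ 1 / 3 ^ k := by gcongr
      _ = (1 / 3) ^ k := by rw [div_pow, one_pow]
      _ < δ := hk
  have hinj : Function.Injective (· / (3 : ℝ) ^ k) := fun x y h ↦ by
    simpa [div_left_inj' (by positivity : (3 : ℝ) ^ k ≠ 0)] using h
  exact not_countable_cantorSet
    ((hcount.insert 0).mono hsub |>.preimage hinj |>.mono (subset_preimage_image _ _))

theorem mem_cantorSet_of_le_abs_chiCantor {ε x : ℝ} (hε : 0 < ε) (h : ε ≤ |chiCantor x|) :
    x ∈ cantorSet := by
  by_contra hx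
  rw [chiCantor, indicator_of_notMem hx, abs_zero] at h
  exact h.not_gt hε

theorem one_le_abs_chiCantor_iff {x : ℝ} : 1 ≤ |chiCantor x| ↔ x ∈ cantorSet :=
  ⟨mem_cantorSet_of_le_abs_chiCantor one_pos, fun hx ↦ by simp [chiCantor, hx]⟩

theorem chiCantor_exceptional_set_eq {δ : ℝ} :
    {x | x ∈ Ioo (-δ) δ ∧ x ≠ 0 ∧ (1 : ℝ) ≤ |chiCantor x|} = cantorSet ∩ Ioo 0 δ := by
  ext x
  simp only [mem_ofPred_eq, one_le_abs_chiCantor_iff, mem_inter_iff, mem_Ioo]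
  constructor
  · rintro ⟨⟨-, hxδ⟩, hx0, hx⟩
    exact ⟨hx, (cantorSet_subset_unitInterval hx).1.lt_of_ne' hx0, hxδ⟩
  · rintro ⟨hx, hx0, hxδ⟩
    exact ⟨⟨by linarith, hxδ⟩, hx0.ne', hx⟩

theorem stmt_7 :
    (∀ ε > 0, ∀ δ > 0,
      MeasureTheory.volume {x | x ∈ Set.Ioo (-δ) δ ∧ x ≠ 0 ∧ ε ≤ |chiCantor x|} = 0) ∧
    (∀ δ > 0, {x | x ∈ Set.Ioo (-δ) δ ∧ x ≠ 0 ∧ (1:ℝ) ≤ |chiCantor x|} = cantorSet ∩ Set.Ioo 0 δ) ∧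
    (∀ δ > 0, ¬ ({x | x ∈ Set.Ioo (-δ) δ ∧ x ≠ 0 ∧ (1:ℝ) ≤ |chiCantor x|}).Countable) := by
  refine ⟨fun ε hε δ _ ↦ ?_, fun δ _ ↦ chiCantor_exceptional_set_eq, fun δ hδ ↦ ?_⟩
  · exact measure_mono_null (fun x hx ↦ mem_cantorSet_of_le_abs_chiCantor hε hx.2.2)
      volume_cantorSet
  · rw [chiCantor_exceptional_set_eq]
    exact not_countable_cantorSet_inter_Ioo hδ
end

section
/- Let A ⊆ ℝ and a ∈ ℝ. Every function f : A → ℝ that has a T₅ limit at a has a unique T₅ limit if and only if the set ((a−δ, a+δ) \ {a}) ∩ A is uncountable for every δ > 0. -/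
open Set

theorem stmt_8 (A : Set ℝ) (a : ℝ) :
    (∀ (f : ℝ → ℝ) (L₁ L₂ : ℝ),
        (∀ ε > 0, ∃ δ > 0, (excepSet A f a L₁ δ ε).Countable) →
        (∀ ε > 0, ∃ δ > 0, (excepSet A f a L₂ δ ε).Countable) → L₁ = L₂) ↔
    (∀ δ > 0, ¬ ((Set.Ioo (a - δ) (a + δ) \ {a}) ∩ A).Countable) := by
  constructor
  · intro h δ hδ hcnt
    have h01 : (0 : ℝ) = 1 := by
      apply h (fun _ => 0) 0 1
      · intro ε hε
        refine ⟨1, one_pos, ?_⟩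
        have : excepSet A (fun _ => 0) a 0 1 ε = ∅ := by
          ext x
          simp only [excepSet, mem_setOf_eq, mem_empty_iff_false, iff_false]
          rintro ⟨-, -, -, hle⟩
          simp at hle; linarith
        rw [this]; exact countable_empty
      · intro ε hε
        refine ⟨δ, hδ, hcnt.mono ?_⟩
        rintro x ⟨hx1, hx2, hx3, -⟩
        exact ⟨⟨hx1, hx2⟩, hx3⟩
    norm_num at h01
  · intro h f L₁ L₂ h1 h2
    by_contra hne
    set ε := |L₁ - L₂| / 2 with hε
    have hεpos : ε > 0 := by
      have : L₁ - L₂ ≠ 0 := sub_ne_zero.mpr hne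
      positivity
    obtain ⟨δ₁, hδ₁, hc₁⟩ := h1 ε hεpos
    obtain ⟨δ₂, hδ₂, hc₂⟩ := h2 ε hεpos
    set δ := min δ₁ δ₂ with hδdef
    have hδ : δ > 0 := lt_min hδ₁ hδ₂
    have hunc := h δ hδ
    apply hunc
    have hsub : (Set.Ioo (a - δ) (a + δ) \ {a}) ∩ A ⊆
        excepSet A f a L₁ δ₁ ε ∪ excepSet A f a L₂ δ₂ ε := by
      rintro x ⟨⟨⟨hx1, hx2⟩, hxa⟩, hxA⟩
      have hxa' : x ≠ a := hxa
      have hd1 : x ∈ Set.Ioo (a - δ₁) (a + δ₁) :=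
        ⟨by have := min_le_left δ₁ δ₂; linarith, by have := min_le_left δ₁ δ₂; linarith⟩
      have hd2 : x ∈ Set.Ioo (a - δ₂) (a + δ₂) :=
        ⟨by have := min_le_right δ₁ δ₂; linarith, by have := min_le_right δ₁ δ₂; linarith⟩
      by_cases hcase : ε ≤ |f x - L₁|
      · exact Or.inl ⟨hd1, hxa', hxA, hcase⟩
      · refine Or.inr ⟨hd2, hxa', hxA, ?_⟩
        push_neg at hcase
        have habs : |L₁ - L₂| ≤ |f x - L₁| + |f x - L₂| := by
          have := abs_sub_abs_le_abs_sub (f x - L₂) (f x - L₁)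
          calc |L₁ - L₂| = |(f x - L₂) - (f x - L₁)| := by ring_nf
            _ ≤ |f x - L₁| + |f x - L₂| := by
                have := abs_sub (f x - L₂) (f x - L₁)
                linarith [abs_sub_comm (f x - L₂) (f x - L₁),
                  abs_add_le (f x - L₂) (L₁ - f x)]
        by_contra hcase2
        push_neg at hcase2
        have : |L₁ - L₂| < 2 * ε := by linarith
        rw [hε] at this; linarith
    exact (hc₁.union hc₂).mono hsub
end

section
/- Let A ⊆ ℝ, f : A → ℝ, a, L ∈ ℝ. Then L is the T₅ limit of f at a if and only if there exist functions g, h : A → ℝ and δ₀ > 0 such that f(x) = g(x) + h(x) for all x ∈ A, g has classical limit L at a, and the set {x ∈ ((a−δ₀, a+δ₀) \ {a}) ∩ A : h(x) ≠ 0} is countable. -/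
open Set

theorem stmt_10 (A : Set ℝ) (f : ℝ → ℝ) (a L : ℝ) :
    (∀ ε > 0, ∃ δ > 0, (excepSet A f a L δ ε).Countable) ↔
    (∃ (g h : ℝ → ℝ) (δ₀ : ℝ), 0 < δ₀ ∧ (∀ x ∈ A, f x = g x + h x) ∧
      (∀ ε > 0, ∃ δ > 0, excepSet A g a L δ ε = ∅) ∧
      {x | x ∈ Set.Ioo (a - δ₀) (a + δ₀) ∧ x ≠ a ∧ x ∈ A ∧ h x ≠ 0}.Countable) := by
  classical
  constructor
  · intro H
    choose δ hδpos hδc using fun n : ℕ => H (1 / (n + 1)) (by positivity)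
    set B := ⋃ n : ℕ, excepSet A f a L (δ n) (1 / (n + 1)) with hB
    have hBc : B.Countable := Set.countable_iUnion hδc
    refine ⟨fun x => if x ∈ B then L else f x,
      fun x => if x ∈ B then f x - L else 0, δ 0, hδpos 0, ?_, ?_, ?_⟩
    · intro x hx; by_cases hxB : x ∈ B <;> simp [hxB]
    · intro ε hε
      obtain ⟨n, hn⟩ := exists_nat_one_div_lt hε
      refine ⟨δ n, hδpos n, ?_⟩
      ext x
      simp only [excepSet, mem_setOf_eq, mem_empty_iff_false, iff_false, not_and]
      intro hx1 hx2 hx3 hx4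
      by_cases hxB : x ∈ B
      · rw [if_pos hxB, sub_self, abs_zero] at hx4
        linarith
      · rw [if_neg hxB] at hx4
        exact hxB (Set.mem_iUnion.2 ⟨n, hx1, hx2, hx3, le_trans hn.le hx4⟩)
    · apply hBc.mono
      rintro x ⟨_, _, _, hx4⟩
      by_contra hxB
      exact hx4 (if_neg hxB)
  · rintro ⟨g, h, δ₀, hδ₀, hfgh, hg, hc⟩
    intro ε hε
    obtain ⟨δg, hδg, hge⟩ := hg ε hε
    refine ⟨min δ₀ δg, lt_min hδ₀ hδg, ?_⟩
    apply hc.mono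
    rintro x ⟨⟨hl, hr⟩, hx2, hx3, hx4⟩
    have hI0 : x ∈ Ioo (a - δ₀) (a + δ₀) :=
      ⟨by have := min_le_left δ₀ δg; linarith, by have := min_le_left δ₀ δg; linarith⟩
    have hIg : x ∈ Ioo (a - δg) (a + δg) :=
      ⟨by have := min_le_right δ₀ δg; linarith, by have := min_le_right δ₀ δg; linarith⟩
    refine ⟨hI0, hx2, hx3, ?_⟩
    intro hhx
    have hmem : x ∈ excepSet A g a L δg ε := by
      refine ⟨hIg, hx2, hx3, ?_⟩
      rw [hfgh x hx3, hhx, add_zero] at hx4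
      exact hx4
    rw [hge] at hmem
    exact hmem
end

section
/- Let A ⊆ ℝ, f₁, f₂ : A → ℝ, a, L₁, L₂ ∈ ℝ. If L₁ is the T₅ limit of f₁ at a and L₂ is the T₅ limit of f₂ at a, then L₁L₂ is the T₅ limit of the product f₁·f₂ at a. -/
open Set

theorem stmt_12 (A : Set ℝ) (f₁ f₂ : ℝ → ℝ) (a L₁ L₂ : ℝ)
    (h₁ : ∀ ε > 0, ∃ δ > 0, (excepSet A f₁ a L₁ δ ε).Countable)
    (h₂ : ∀ ε > 0, ∃ δ > 0, (excepSet A f₂ a L₂ δ ε).Countable) :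
    ∀ ε > 0, ∃ δ > 0, (excepSet A (fun x => f₁ x * f₂ x) a (L₁ * L₂) δ ε).Countable := by
  intro ε hε
  set ε₁ : ℝ := min 1 (ε / (1 + |L₁| + |L₂|)) with hε₁def
  have hM : (0:ℝ) < 1 + |L₁| + |L₂| := by positivity
  have hε₁ : 0 < ε₁ := lt_min one_pos (div_pos hε hM)
  obtain ⟨δ₁, hδ₁, hc₁⟩ := h₁ ε₁ hε₁
  obtain ⟨δ₂, hδ₂, hc₂⟩ := h₂ ε₁ hε₁
  refine ⟨min δ₁ δ₂, lt_min hδ₁ hδ₂, ?_⟩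
  refine ((hc₁.union hc₂).mono ?_)
  intro x ⟨hxI, hxa, hxA, hxE⟩
  have hI₁ : x ∈ Set.Ioo (a - δ₁) (a + δ₁) := by
    constructor
    · linarith [hxI.1, min_le_left δ₁ δ₂]
    · linarith [hxI.2, min_le_left δ₁ δ₂]
  have hI₂ : x ∈ Set.Ioo (a - δ₂) (a + δ₂) := by
    constructor
    · linarith [hxI.1, min_le_right δ₁ δ₂]
    · linarith [hxI.2, min_le_right δ₁ δ₂]
  by_contra hcon
  rw [Set.mem_union] at hcon
  push_neg at hcon
  obtain ⟨hn₁, hn₂⟩ := hcon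
  have h1 : |f₁ x - L₁| < ε₁ := by
    by_contra h; exact hn₁ ⟨hI₁, hxa, hxA, not_lt.mp h⟩
  have h2 : |f₂ x - L₂| < ε₁ := by
    by_contra h; exact hn₂ ⟨hI₂, hxa, hxA, not_lt.mp h⟩
  have key : f₁ x * f₂ x - L₁ * L₂ =
      (f₁ x - L₁) * (f₂ x - L₂) + L₁ * (f₂ x - L₂) + L₂ * (f₁ x - L₁) := by ring
  have hbound : |f₁ x * f₂ x - L₁ * L₂| < ε₁ * (1 + |L₁| + |L₂|) := by
    rw [key]
    calc |(f₁ x - L₁) * (f₂ x - L₂) + L₁ * (f₂ x - L₂) + L₂ * (f₁ x - L₁)|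
        ≤ |f₁ x - L₁| * |f₂ x - L₂| + |L₁| * |f₂ x - L₂| + |L₂| * |f₁ x - L₁| := by
          calc _ ≤ |(f₁ x - L₁) * (f₂ x - L₂) + L₁ * (f₂ x - L₂)| + |L₂ * (f₁ x - L₁)| :=
                abs_add_le _ _
            _ ≤ |(f₁ x - L₁) * (f₂ x - L₂)| + |L₁ * (f₂ x - L₂)| + |L₂ * (f₁ x - L₁)| := by
                gcongr; exact abs_add_le _ _
            _ = _ := by rw [abs_mul, abs_mul, abs_mul]
      _ < ε₁ * ε₁ + |L₁| * ε₁ + |L₂| * ε₁ := by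
          have hε₁' : ε₁ ≤ 1 := min_le_left _ _
          nlinarith [abs_nonneg (f₁ x - L₁), abs_nonneg (f₂ x - L₂),
            abs_nonneg L₁, abs_nonneg L₂]
      _ ≤ ε₁ * 1 + |L₁| * ε₁ + |L₂| * ε₁ := by
          have hε₁' : ε₁ ≤ 1 := min_le_left _ _
          nlinarith
      _ = ε₁ * (1 + |L₁| + |L₂|) := by ring
  have hfinal : ε₁ * (1 + |L₁| + |L₂|) ≤ ε := by
    have : ε₁ ≤ ε / (1 + |L₁| + |L₂|) := min_le_right _ _
    calc ε₁ * (1 + |L₁| + |L₂|) ≤ (ε / (1 + |L₁| + |L₂|)) * (1 + |L₁| + |L₂|) := by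
          gcongr
      _ = ε := div_mul_cancel₀ ε hM.ne'
  linarith [hxE, hbound]
end

section
/- Let A ⊆ ℝ, f : A → ℝ, a, L ∈ ℝ with L ≠ 0. If L is the T₅ limit of f at a, then 1/L is the T₅ limit of the function x ↦ 1/f(x) at a. -/
open Set

theorem stmt_13 (A : Set ℝ) (f : ℝ → ℝ) (a L : ℝ) (hL : L ≠ 0)
    (h : ∀ ε > 0, ∃ δ > 0, (excepSet A f a L δ ε).Countable) :
    ∀ ε > 0, ∃ δ > 0, (excepSet A (fun x => 1 / f x) a (1 / L) δ ε).Countable := by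
  intro ε hε
  have hL2 : (0:ℝ) < |L| := abs_pos.mpr hL
  set ε' := min (|L| / 2) (ε * |L| ^ 2 / 2) with hε'def
  have hε' : 0 < ε' := by
    apply lt_min (by positivity) (by positivity)
  obtain ⟨δ, hδ, hc⟩ := h ε' hε'
  refine ⟨δ, hδ, hc.mono ?_⟩
  intro x hx
  obtain ⟨h1, h2, h3, h4⟩ := hx
  refine ⟨h1, h2, h3, ?_⟩
  by_contra hlt
  push_neg at hlt
  -- hlt : |f x - L| < ε'
  have hfl : |f x - L| < |L| / 2 := lt_of_lt_of_le hlt (min_le_left _ _)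
  have hfx : |L| / 2 ≤ |f x| := by
    have := abs_sub_abs_le_abs_sub L (f x)
    rw [abs_sub_comm] at this
    linarith
  have hfne : f x ≠ 0 := by
    intro h0
    rw [h0, abs_zero] at hfx
    linarith
  have key : |(fun x => 1 / f x) x - 1 / L| < ε := by
    simp only
    rw [div_sub_div _ _ hfne hL, abs_div, abs_mul]
    rw [div_lt_iff₀ (by positivity)]
    have h5 : |1 * L - f x * 1| = |f x - L| := by
      rw [one_mul, mul_one, abs_sub_comm]
    rw [h5]
    have h6 : |f x - L| < ε * |L| ^ 2 / 2 := lt_of_lt_of_le hlt (min_le_right _ _)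
    have h7 : ε * (|L| / 2 * |L|) ≤ ε * (|f x| * |L|) := by
      apply mul_le_mul_of_nonneg_left _ hε.le
      apply mul_le_mul_of_nonneg_right hfx hL2.le
    nlinarith
  linarith [le_trans h4 key.le]
end

section
/- Let Ω = ⋃_{n≥1} [1/n − 1/2ⁿ, 1/n) and χ_Ω : ℝ → ℝ its characteristic function. Then 0 is the approximate (T₂) limit of χ_Ω at 0, but 0 is not the T₆ limit of χ_Ω at 0: for every ε ∈ (0, 1] and every δ > 0, the set {x ∈ (−δ, δ) \ {0} : |χ_Ω(x)| ≥ ε} has positive Lebesgue measure. -/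
/-!
The `n`-th interval of Ω lies in `[1/(2n), 1/n)` and has length `2⁻ⁿ`. Hence `Ω ∩ (-δ, δ)` only
meets intervals with `n > 1/(2δ)`, whose total length is at most `2^(-⌊1/(2δ)⌋)`; this is
`o(δ)`, which gives the approximate limit. Every interval has positive length and they
accumulate at `0`, so no punctured neighbourhood of `0` meets Ω in a null set.
-/

open MeasureTheory Filter

/-- The set Ω = ⋃_{n ≥ 1} [1/n - 1/2ⁿ, 1/n). -/
def OmegaSet : Set ℝ :=
  ⋃ n : ℕ, Set.Ico (1 / (n + 1 : ℝ) - 1 / 2 ^ (n + 1)) (1 / (n + 1 : ℝ))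

/-- Characteristic function of Ω. -/
noncomputable def chiOmega : ℝ → ℝ := Set.indicator OmegaSet (fun _ => 1)

open Set Topology
open scoped ENNReal

def omegaInterval (n : ℕ) : Set ℝ :=
  Ico (1 / (n + 1 : ℝ) - 1 / 2 ^ (n + 1)) (1 / (n + 1 : ℝ))

lemma omegaInterval_subset_Ico (n : ℕ) :
    omegaInterval n ⊆ Ico (1 / (2 * (n + 1))) (1 / (n + 1 : ℝ)) := by
  have hpow : (2 * (n + 1) : ℝ) ≤ 2 ^ (n + 1) := by
    rw [pow_succ']
    exact_mod_cast Nat.mul_le_mul_left 2 (Nat.lt_two_pow_self (n := n))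
  have hgap : (1 / 2 ^ (n + 1) : ℝ) ≤ 1 / (2 * (n + 1)) :=
    one_div_le_one_div_of_le (by positivity) hpow
  have hhalf : (1 / (n + 1 : ℝ)) - 1 / (2 * (n + 1)) = 1 / (2 * (n + 1)) := by
    field_simp; ring
  exact Ico_subset_Ico_left (by linarith)

lemma volume_omegaInterval (n : ℕ) : volume (omegaInterval n) = 2⁻¹ ^ (n + 1) := by
  rw [omegaInterval, Real.volume_Ico, sub_sub_cancel, one_div, ← inv_pow,
    ENNReal.ofReal_pow (by norm_num), ENNReal.ofReal_inv_of_pos two_pos, ENNReal.ofReal_ofNat]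

lemma OmegaSet_inter_Iio_subset {N : ℕ} {δ : ℝ} (hδ : 2 * N * δ ≤ 1) :
    OmegaSet ∩ Iio δ ⊆ ⋃ k, omegaInterval (k + N) := by
  rintro x ⟨hxΩ, hxδ⟩
  obtain ⟨n, hn⟩ := mem_iUnion.mp hxΩ
  have hx := (omegaInterval_subset_Ico n hn).1
  have hNn : N < n + 1 := by
    have hxδ : x < δ := hxδ
    have hxpos : 0 < x := lt_of_lt_of_le (by positivity) hx
    rw [div_le_iff₀ (by positivity)] at hx
    exact_mod_cast (show (N : ℝ) < n + 1 by nlinarith)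
  exact mem_iUnion.mpr ⟨n - N, by rwa [Nat.sub_add_cancel (by omega)]⟩

lemma volume_OmegaSet_inter_Iio_le {N : ℕ} {δ : ℝ} (hδ : 2 * N * δ ≤ 1) :
    volume (OmegaSet ∩ Iio δ) ≤ 2⁻¹ ^ N :=
  calc volume (OmegaSet ∩ Iio δ)
      ≤ ∑' k, volume (omegaInterval (k + N)) :=
        (measure_mono (OmegaSet_inter_Iio_subset hδ)).trans (measure_iUnion_le _)
    _ = 2⁻¹ ^ (N + 1) * ∑' k : ℕ, 2⁻¹ ^ k := by
        rw [← ENNReal.tsum_mul_left]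
        exact tsum_congr fun k => by rw [volume_omegaInterval]; ring
    _ = 2⁻¹ ^ N := by
        rw [ENNReal.tsum_geometric, ENNReal.one_sub_inv_two, inv_inv, pow_succ, mul_assoc,
          ENNReal.inv_mul_cancel two_ne_zero ENNReal.ofNat_ne_top, mul_one]

lemma volume_OmegaSet_inter_Ioo_div_le {N : ℕ} {δ : ℝ} (hle : 2 * N * δ ≤ 1)
    (hlt : 1 < 2 * (N + 1) * δ) :
    volume (OmegaSet ∩ Ioo (-δ) δ) / ENNReal.ofReal (2 * δ) ≤ (N + 1) * 2⁻¹ ^ N := by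
  have hone : 1 ≤ ((N : ℝ≥0∞) + 1) * ENNReal.ofReal (2 * δ) := by
    rw [← ENNReal.ofReal_natCast, ← ENNReal.ofReal_one, ← ENNReal.ofReal_add (by positivity)
      zero_le_one, ← ENNReal.ofReal_mul (by positivity), ENNReal.ofReal_one]
    exact ENNReal.one_le_ofReal.mpr (by linarith)
  refine ENNReal.div_le_of_le_mul ?_
  calc volume (OmegaSet ∩ Ioo (-δ) δ)
      ≤ 2⁻¹ ^ N := (measure_mono (inter_subset_inter_right _ Ioo_subset_Iio_self)).trans
        (volume_OmegaSet_inter_Iio_le hle)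
    _ ≤ 2⁻¹ ^ N * (((N : ℝ≥0∞) + 1) * ENNReal.ofReal (2 * δ)) := le_mul_of_one_le_right' hone
    _ = (N + 1) * 2⁻¹ ^ N * ENNReal.ofReal (2 * δ) := by ring

lemma tendsto_natCast_add_one_mul_inv_two_pow :
    Tendsto (fun N : ℕ => ((N : ℝ≥0∞) + 1) * 2⁻¹ ^ N) atTop (𝓝 0) := by
  have hreal : Tendsto (fun N : ℕ => (N : ℝ) * 2⁻¹ ^ N + 2⁻¹ ^ N) atTop (𝓝 0) := by
    simpa using
      (tendsto_self_mul_const_pow_of_lt_one (r := (2⁻¹ : ℝ)) (by norm_num) (by norm_num)).add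
        (tendsto_pow_atTop_nhds_zero_of_lt_one (r := (2⁻¹ : ℝ)) (by norm_num) (by norm_num))
  refine (ENNReal.ofReal_zero ▸ ENNReal.tendsto_ofReal hreal).congr fun N => ?_
  rw [← add_one_mul, ENNReal.ofReal_mul (by positivity), ENNReal.ofReal_pow (by norm_num),
    ENNReal.ofReal_inv_of_pos two_pos, ENNReal.ofReal_ofNat, ENNReal.ofReal_add (by positivity)
    zero_le_one, ENNReal.ofReal_natCast, ENNReal.ofReal_one]

lemma tendsto_volume_OmegaSet_inter_Ioo_div :
    Tendsto (fun δ : ℝ => volume (OmegaSet ∩ Ioo (-δ) δ) / ENNReal.ofReal (2 * δ))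
      (𝓝[>] 0) (𝓝 0) := by
  have hN : Tendsto (fun δ : ℝ => ⌊1 / (2 * δ)⌋₊) (𝓝[>] 0) atTop :=
    tendsto_nat_floor_atTop.comp <| (tendsto_inv_nhdsGT_zero.atTop_div_const two_pos).congr
      fun δ => by field_simp
  refine tendsto_of_tendsto_of_tendsto_of_le_of_le' tendsto_const_nhds
    (tendsto_natCast_add_one_mul_inv_two_pow.comp hN) (Eventually.of_forall fun _ => zero_le) ?_
  filter_upwards [self_mem_nhdsWithin] with δ (hδ : 0 < δ)
  have hfloor_le := Nat.floor_le (by positivity : 0 ≤ 1 / (2 * δ))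
  have hlt_floor := Nat.lt_floor_add_one (1 / (2 * δ))
  rw [le_div_iff₀ (by positivity)] at hfloor_le
  rw [div_lt_iff₀ (by positivity)] at hlt_floor
  exact volume_OmegaSet_inter_Ioo_div_le (by linarith) (by linarith)

lemma chiOmega_eq_one {x : ℝ} (hx : x ∈ OmegaSet) : chiOmega x = 1 :=
  indicator_of_mem hx _

lemma mem_OmegaSet_of_le_abs_chiOmega {ε x : ℝ} (hε : 0 < ε) (h : ε ≤ |chiOmega x|) :
    x ∈ OmegaSet := by
  by_contra hx
  rw [chiOmega, indicator_of_notMem hx, abs_zero] at h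
  exact hε.not_ge h

theorem stmt_17 :
    (∀ ε > 0,
      Tendsto (fun δ : ℝ =>
          volume ({x | ε ≤ |chiOmega x - 0|} ∩ Set.Ioo (-δ) δ) / ENNReal.ofReal (2 * δ))
        (nhdsWithin 0 (Set.Ioi 0)) (nhds 0)) ∧
    (∀ ε : ℝ, ε ∈ Set.Ioc (0:ℝ) 1 → ∀ δ > 0,
      0 < volume {x | x ∈ Set.Ioo (-δ) δ ∧ x ≠ 0 ∧ ε ≤ |chiOmega x - 0|}) := by
  refine ⟨fun ε hε => ?_, fun ε hε δ hδ => ?_⟩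
  · have hsub : {x | ε ≤ |chiOmega x - 0|} ⊆ OmegaSet := fun x hx =>
      mem_OmegaSet_of_le_abs_chiOmega hε (by simpa using hx)
    exact tendsto_of_tendsto_of_tendsto_of_le_of_le tendsto_const_nhds
      tendsto_volume_OmegaSet_inter_Ioo_div (fun _ => zero_le)
      fun δ => ENNReal.div_le_div_right (measure_mono (inter_subset_inter_left _ hsub)) _
  · obtain ⟨n, hn⟩ := exists_nat_one_div_lt hδ
    have hsub : omegaInterval n ⊆ {x | x ∈ Ioo (-δ) δ ∧ x ≠ 0 ∧ ε ≤ |chiOmega x - 0|} := by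
      intro x hx
      have hbounds := omegaInterval_subset_Ico n hx
      have hpos : 0 < x := lt_of_lt_of_le (by positivity) hbounds.1
      refine ⟨⟨by linarith, hbounds.2.trans hn⟩, hpos.ne', ?_⟩
      rw [sub_zero, chiOmega_eq_one (mem_iUnion_of_mem n hx), abs_one]
      exact hε.2
    refine lt_of_lt_of_le ?_ (measure_mono hsub)
    rw [volume_omegaInterval]
    exact ENNReal.pow_pos (ENNReal.inv_pos.mpr ENNReal.ofNat_ne_top) _
end

section
/- Let A ⊆ ℝ be a measurable set and a ∈ ℝ. Every function f : A → ℝ that has a T₆ limit at a has a unique T₆ limit if and only if |((a−δ, a+δ) \ {a}) ∩ A| > 0 for every δ > 0, where |·| is Lebesgue measure. -/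
open Set

theorem stmt_18 (A : Set ℝ) (hA : MeasurableSet A) (a : ℝ) :
    (∀ (f : ℝ → ℝ) (L₁ L₂ : ℝ),
        (∀ ε > 0, ∃ δ > 0, MeasureTheory.volume (excepSet A f a L₁ δ ε) = 0) →
        (∀ ε > 0, ∃ δ > 0, MeasureTheory.volume (excepSet A f a L₂ δ ε) = 0) → L₁ = L₂) ↔
    (∀ δ > 0, 0 < MeasureTheory.volume ((Set.Ioo (a - δ) (a + δ) \ {a}) ∩ A)) := by
  constructor
  · intro h δ hδ
    by_contra hpos
    have h0 : MeasureTheory.volume ((Set.Ioo (a - δ) (a + δ) \ {a}) ∩ A) = 0 := by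
      simpa [pos_iff_ne_zero] using hpos
    have key : ∀ L : ℝ, ∀ ε > (0:ℝ), ∃ δ' > 0,
        MeasureTheory.volume (excepSet A (fun _ => 0) a L δ' ε) = 0 := by
      intro L ε hε
      refine ⟨δ, hδ, MeasureTheory.measure_mono_null ?_ h0⟩
      rintro x ⟨hx1, hx2, hx3, _⟩
      exact ⟨⟨hx1, hx2⟩, hx3⟩
    have := h (fun _ => 0) 0 1 (key 0) (key 1)
    norm_num at this
  · intro hpos f L₁ L₂ h1 h2
    by_contra hne
    have hε : 0 < |L₁ - L₂| / 2 := by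
      have : L₁ - L₂ ≠ 0 := sub_ne_zero.mpr hne
      positivity
    obtain ⟨δ₁, hδ₁, hn1⟩ := h1 _ hε
    obtain ⟨δ₂, hδ₂, hn2⟩ := h2 _ hε
    set δ := min δ₁ δ₂ with hδdef
    have hδ : 0 < δ := lt_min hδ₁ hδ₂
    have hp := hpos δ hδ
    have hsub : (Set.Ioo (a - δ) (a + δ) \ {a}) ∩ A ⊆
        excepSet A f a L₁ δ₁ (|L₁ - L₂| / 2) ∪ excepSet A f a L₂ δ₂ (|L₁ - L₂| / 2) := by
      rintro x ⟨⟨hx1, hx2⟩, hx3⟩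
      have hI1 : x ∈ Set.Ioo (a - δ₁) (a + δ₁) := by
        constructor
        · linarith [hx1.1, min_le_left δ₁ δ₂]
        · linarith [hx1.2, min_le_left δ₁ δ₂]
      have hI2 : x ∈ Set.Ioo (a - δ₂) (a + δ₂) := by
        constructor
        · linarith [hx1.1, min_le_right δ₁ δ₂]
        · linarith [hx1.2, min_le_right δ₁ δ₂]
      by_contra hmem
      rw [Set.mem_union, not_or] at hmem
      obtain ⟨hm1, hm2⟩ := hmem
      have e1 : |f x - L₁| < |L₁ - L₂| / 2 := by
        by_contra hc
        push_neg at hc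
        exact hm1 ⟨hI1, hx2, hx3, hc⟩
      have e2 : |f x - L₂| < |L₁ - L₂| / 2 := by
        by_contra hc
        push_neg at hc
        exact hm2 ⟨hI2, hx2, hx3, hc⟩
      have : |L₁ - L₂| ≤ |f x - L₁| + |f x - L₂| := by
        have := abs_sub_abs_le_abs_sub (f x - L₁) (f x - L₂)
        calc |L₁ - L₂| = |(f x - L₂) - (f x - L₁)| := by ring_nf
          _ ≤ |f x - L₂| + |f x - L₁| := abs_sub _ _
          _ = |f x - L₁| + |f x - L₂| := by ring
      linarith
    have : MeasureTheory.volume ((Set.Ioo (a - δ) (a + δ) \ {a}) ∩ A) = 0 := by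
      refine MeasureTheory.measure_mono_null hsub ?_
      exact MeasureTheory.measure_union_null hn1 hn2
    rw [this] at hp
    exact lt_irrefl _ hp
end
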